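/- arXiv:1401.1559 — 2 statements merged into one kernel-verified Lean document; each statement's English description precedes it below -/
import Mathlib

section
/- Consider the pricing game with seller costs: each seller i has cost c_i ≥ 0 and utility (p_i - c_i)·1{i ∈ X(p)}. For any monotone v, cost vector c, up-consistent decision map X, and ε > 0, there exists an ε-Nash equilibrium p with X(p) = X(c). -/
/-!
Run an ascending auction from `p = c`: while some winner `i` of `X p` would still be selected at
price `p i + ε`, raise its price by `ε`. Up-consistency keeps the winning set equal to `X c`
along the way, and the total winning price is bounded by `v (X c)` (compare with `T = ∅`), so the
auction stops after finitely many steps. At the terminal prices a revealed-preference argument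
shows that no seller can win at a price exceeding its current one (winners) by more than `ε`, or
exceeding its cost (losers, whose price never moved).
-/

open Function

def IsDemand {ι : Type*} (v : Finset ι → ℝ) (q : ι → ℝ) (S : Finset ι) : Prop :=
  ∀ T : Finset ι, v T - ∑ i ∈ T, q i ≤ v S - ∑ i ∈ S, q i

theorem exists_of_bounded_potential {α : Type*} {P Q : α → Prop} (f : α → ℝ) {B ε : ℝ}
    (hε : 0 < ε) {a₀ : α} (h₀ : P a₀) (hB : ∀ a, P a → f a ≤ B)
    (hstep : ∀ a, P a → ¬ Q a → ∃ b, P b ∧ f a + ε ≤ f b) :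
    ∃ a, P a ∧ Q a := by
  by_contra! hno
  have hgrow : ∀ k : ℕ, ∃ a, P a ∧ f a₀ + k * ε ≤ f a := by
    intro k
    induction k with
    | zero => exact ⟨a₀, h₀, by simp⟩
    | succ k ih =>
      obtain ⟨a, ha, hfa⟩ := ih
      obtain ⟨b, hb, hfb⟩ := hstep a ha (hno a ha)
      exact ⟨b, hb, by push_cast; linarith⟩
  obtain ⟨k, hk⟩ := exists_nat_gt ((B - f a₀) / ε)
  obtain ⟨a, ha, hfa⟩ := hgrow k
  rw [div_lt_iff₀ hε] at hk
  linarith [hB a ha]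

namespace IsDemand

variable {ι : Type*} {v : Finset ι → ℝ} {q q' : ι → ℝ} {S S' : Finset ι}

theorem sum_le (hS : IsDemand v q S) (hv0 : v ∅ = 0) : ∑ i ∈ S, q i ≤ v S := by
  have := hS ∅
  simp only [hv0, Finset.sum_empty, sub_zero] at this
  linarith

theorem apply_le_of_notMem_of_mem (hS : IsDemand v q S) (hS' : IsDemand v q' S') {i : ι}
    (hqq' : ∀ j ≠ i, q j = q' j) (hi : i ∉ S) (hi' : i ∈ S') : q' i ≤ q i := by
  classical
  have hsumS : ∑ j ∈ S, q' j = ∑ j ∈ S, q j :=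
    Finset.sum_congr rfl fun j hj => (hqq' j (ne_of_mem_of_not_mem hj hi)).symm
  have hsumS' : ∑ j ∈ S', q' j - q' i = ∑ j ∈ S', q j - q i := by
    rw [← Finset.add_sum_erase S' q' hi', ← Finset.add_sum_erase S' q hi',
      Finset.sum_congr rfl fun j hj => (hqq' j (Finset.ne_of_mem_erase hj)).symm]
    ring
  linarith [hS S', hS' S]

end IsDemand

section AscendingAuction

variable {ι : Type*} [DecidableEq ι] {v : Finset ι → ℝ} {X : (ι → ℝ) → Finset ι} {c : ι → ℝ}
  {ε : ℝ}

theorem update_nonneg {p : ι → ℝ} (hp : ∀ j, 0 ≤ p j) {i : ι} {a : ℝ} (ha : 0 ≤ a) (j : ι) :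
    0 ≤ update p i a j := by
  rcases eq_or_ne j i with rfl | hj
  · simpa using ha
  · simpa [hj] using hp j

theorem ascending_step (hc : ∀ i, 0 ≤ c i)
    (hXup : ∀ q : ι → ℝ, (∀ i, 0 ≤ q i) → ∀ i ∈ X q, ∀ q' : ℝ, q i < q' →
      X (update q i q') = X q ∨ i ∉ X (update q i q'))
    (hε : 0 < ε) {p : ι → ℝ} (hcp : ∀ i, c i ≤ p i)
    (hoff : ∀ j ∉ X c, p j = c j) (hX : X p = X c) {i : ι} (hi : i ∈ X c)
    (hmem : i ∈ X (update p i (p i + ε))) :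
    (∀ j, c j ≤ update p i (p i + ε) j) ∧ (∀ j ∉ X c, update p i (p i + ε) j = c j) ∧
      X (update p i (p i + ε)) = X c ∧
      ∑ j ∈ X c, update p i (p i + ε) j = ∑ j ∈ X c, p j + ε := by
  have hX' : X (update p i (p i + ε)) = X p :=
    (hXup p (fun j => (hc j).trans (hcp j)) i (hX ▸ hi) _ (by linarith)).resolve_right
      (not_not.2 hmem)
  refine ⟨fun j => ?_, fun j hj => ?_, hX'.trans hX, ?_⟩
  · rcases eq_or_ne j i with rfl | hj
    · simpa using (hcp j).trans (le_add_of_nonneg_right hε.le)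
    · simpa [hj] using hcp j
  · simpa [(ne_of_mem_of_not_mem hi hj).symm] using hoff j hj
  · rw [Finset.sum_update_of_mem hi, Finset.sum_eq_add_sum_sdiff_singleton_of_mem hi p]
    ring

theorem exists_ascending_terminal (hv0 : v ∅ = 0) (hc : ∀ i, 0 ≤ c i)
    (hXd : ∀ q : ι → ℝ, (∀ i, 0 ≤ q i) → IsDemand v q (X q))
    (hXup : ∀ q : ι → ℝ, (∀ i, 0 ≤ q i) → ∀ i ∈ X q, ∀ q' : ℝ, q i < q' →
      X (update q i q') = X q ∨ i ∉ X (update q i q'))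
    (hε : 0 < ε) :
    ∃ p, X p = X c ∧ (∀ i, c i ≤ p i) ∧ (∀ j ∉ X p, p j = c j) ∧
      ∀ i ∈ X p, i ∉ X (update p i (p i + ε)) := by
  obtain ⟨p, ⟨hcp, hoff, hX⟩, hterm⟩ := exists_of_bounded_potential
    (P := fun p => (∀ i, c i ≤ p i) ∧ (∀ j ∉ X c, p j = c j) ∧ X p = X c)
    (Q := fun p => ∀ i ∈ X c, i ∉ X (update p i (p i + ε)))
    (fun p => ∑ j ∈ X c, p j) hε ⟨fun _ => le_rfl, fun _ _ => rfl, rfl⟩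
    (fun p ⟨hcp, _, hX⟩ => hX ▸ (hXd p fun i => (hc i).trans (hcp i)).sum_le hv0)
    (fun p ⟨hcp, hoff, hX⟩ hnot => by
      simp only [not_forall, not_not] at hnot
      obtain ⟨i, hi, hmem⟩ := hnot
      obtain ⟨hcp', hoff', hX', hsum⟩ := ascending_step hc hXup hε hcp hoff hX hi hmem
      exact ⟨_, ⟨hcp', hoff', hX'⟩, hsum.ge⟩)
  exact ⟨p, hX, hcp, hX ▸ hoff, hX ▸ hterm⟩

theorem epsNash_of_ascending_terminal
    (hXd : ∀ q : ι → ℝ, (∀ i, 0 ≤ q i) → IsDemand v q (X q))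
    (hε : 0 < ε) {p : ι → ℝ} (hp : ∀ i, 0 ≤ p i) (hcp : ∀ i, c i ≤ p i)
    (hoff : ∀ j ∉ X p, p j = c j) (hterm : ∀ i ∈ X p, i ∉ X (update p i (p i + ε)))
    (i : ι) (q : ℝ) (hq : 0 ≤ q) :
    (if i ∈ X (update p i q) then q - c i else 0) ≤
      (if i ∈ X p then p i - c i else 0) + ε := by
  have hagree : ∀ a b : ℝ, ∀ j ≠ i, update p i a j = update p i b j := by
    intro a b j hj
    simp [hj]
  by_cases hi : i ∈ X p
  · rw [if_pos hi]
    split_ifs with hiq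
    · have := (hXd _ (update_nonneg hp (by linarith [hp i]))).apply_le_of_notMem_of_mem
        (hXd _ (update_nonneg hp hq)) (hagree _ _) (hterm i hi) hiq
      simp only [update_self] at this
      linarith
    · linarith [hcp i]
  · rw [if_neg hi]
    split_ifs with hiq
    · have := (hXd p hp).apply_le_of_notMem_of_mem (hXd _ (update_nonneg hp hq))
        (fun j hj => by simp [hj]) hi hiq
      simp only [update_self] at this
      linarith [hoff i hi]
    · linarith

end AscendingAuction

theorem stmt13_general {n : ℕ} (v : Finset (Fin n) → ℝ)
    (hv0 : v ∅ = 0)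
    (c : Fin n → ℝ) (hc : ∀ i, 0 ≤ c i)
    (X : (Fin n → ℝ) → Finset (Fin n))
    (hXd : ∀ q : Fin n → ℝ, (∀ i, 0 ≤ q i) → ∀ T : Finset (Fin n),
      v T - ∑ i ∈ T, q i ≤ v (X q) - ∑ i ∈ X q, q i)
    (hXup : ∀ q : Fin n → ℝ, (∀ i, 0 ≤ q i) → ∀ i ∈ X q, ∀ q' : ℝ, q i < q' →
      X (Function.update q i q') = X q ∨ i ∉ X (Function.update q i q'))
    (ε : ℝ) (hε : 0 < ε) :
    ∃ p : Fin n → ℝ, (∀ i, 0 ≤ p i) ∧ X p = X c ∧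
      ∀ i : Fin n, ∀ q : ℝ, 0 ≤ q →
        (if i ∈ X (Function.update p i q) then q - c i else 0) ≤
        (if i ∈ X p then p i - c i else 0) + ε := by
  obtain ⟨p, hX, hcp, hoff, hterm⟩ := exists_ascending_terminal hv0 hc hXd hXup hε
  have hp : ∀ i, 0 ≤ p i := fun i => (hc i).trans (hcp i)
  exact ⟨p, hp, hX, epsNash_of_ascending_terminal hXd hε hp hcp hoff hterm⟩

/-- In the pricing game with seller costs `c` and an up-consistent
decision map `X`, for every `ε > 0` there exists an `ε`-Nash equilibrium `p`
with `X p = X c`. -/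
theorem stmt13 {n : ℕ} (v : Finset (Fin n) → ℝ)
    (hmono : ∀ S T : Finset (Fin n), S ⊆ T → v S ≤ v T)
    (hv0 : v ∅ = 0)
    (c : Fin n → ℝ) (hc : ∀ i, 0 ≤ c i)
    (X : (Fin n → ℝ) → Finset (Fin n))
    (hXd : ∀ q : Fin n → ℝ, (∀ i, 0 ≤ q i) → ∀ T : Finset (Fin n),
      v T - ∑ i ∈ T, q i ≤ v (X q) - ∑ i ∈ X q, q i)
    (hXup : ∀ q : Fin n → ℝ, (∀ i, 0 ≤ q i) → ∀ i ∈ X q, ∀ q' : ℝ, q i < q' →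
      X (Function.update q i q') = X q ∨ i ∉ X (Function.update q i q'))
    (ε : ℝ) (hε : 0 < ε) :
    ∃ p : Fin n → ℝ, (∀ i, 0 ≤ p i) ∧ X p = X c ∧
      ∀ i : Fin n, ∀ q : ℝ, 0 ≤ q →
        (if i ∈ X (Function.update p i q) then q - c i else 0) ≤
        (if i ∈ X p then p i - c i else 0) + ε :=
  stmt13_general v hv0 c hc X hXd hXup ε hε
end

section
/- There is an instance of the pricing game with costs and a submodular buyer valuation whose Price of Anarchy is unbounded: for odd k ≫ ℓ, with sellers 0,…,ℓ having cost k−ℓ and sellers ℓ+1,…,ℓ+k having cost 0, and v(S) = min{kℓ, Σ_{i∈S} w_i} with w_i = k for i ≤ ℓ and w_i = ℓ otherwise, the price vector p_i = k−ℓ (i ≤ ℓ), p_i = ℓ (i > ℓ) with lexicographic tie-breaking is a pure Nash equilibrium of welfare ℓ², while the optimal welfare is ℓ·k. -/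
/-!
At the prices `p` every bundle of `ℓ` heavy sellers gives the buyer surplus `kℓ - ℓ(k - ℓ) = ℓ²`,
no bundle gives more, and a bundle containing a light seller gives at most `ℓ² - ℓ`. If seller `i`
deviates to price `q` and is still bought, the bought bundle gains `p i - q` of surplus, whereas
some heavy `ℓ`-bundle avoiding `i` still offers `ℓ²`; comparing the two gives `q ≤ c i`. So no
seller can earn more than the `0` he earns at `p`. The bought bundle has welfare `ℓ²`, while the
`k` light sellers together have value `kℓ` and cost `0`.
-/

open Finset Function

section PricingGame

variable {ι : Type*}

/-- The welfare `v S - c(S)` of a bundle is `surplus v c S`. -/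
def surplus (v : Finset ι → ℝ) (p : ι → ℝ) (T : Finset ι) : ℝ := v T - ∑ i ∈ T, p i

variable [DecidableEq ι] {v : Finset ι → ℝ} {p : ι → ℝ} {i : ι} {q : ℝ} {T : Finset ι}

lemma surplus_update_of_mem (hi : i ∈ T) :
    surplus v (update p i q) T = surplus v p T + p i - q := by
  rw [surplus, surplus, sum_update_of_mem hi, sdiff_singleton_eq_erase, sum_erase_eq_sub hi]
  ring

lemma surplus_update_of_notMem (hi : i ∉ T) : surplus v (update p i q) T = surplus v p T := by
  rw [surplus, surplus, sum_update_of_notMem hi]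

lemma le_of_mem_of_surplus_update_le {R : Finset ι} {c : ℝ} (hiT : i ∈ T) (hiR : i ∉ R)
    (hT : surplus v (update p i q) R ≤ surplus v (update p i q) T)
    (hgap : surplus v p T + (p i - c) ≤ surplus v p R) : q ≤ c := by
  rw [surplus_update_of_mem hiT, surplus_update_of_notMem hiR] at hT
  linarith

end PricingGame

lemma Finset.sum_ite_const_const {ι R : Type*} [Semiring R] (s : Finset ι) (P : ι → Prop)
    [DecidablePred P] (a b : R) :
    ∑ i ∈ s, (if P i then a else b) = #{i ∈ s | P i} * a + #{i ∈ s | ¬P i} * b := by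
  simp only [sum_ite, sum_const, nsmul_eq_mul]

namespace UnboundedPoA

variable (ℓ k : ℕ)

def weight (i : Fin (ℓ + k + 1)) : ℝ := if (i : ℕ) ≤ ℓ then (k : ℝ) else (ℓ : ℝ)

def cost (i : Fin (ℓ + k + 1)) : ℝ := if (i : ℕ) ≤ ℓ then (k : ℝ) - ℓ else 0

def price (i : Fin (ℓ + k + 1)) : ℝ := if (i : ℕ) ≤ ℓ then (k : ℝ) - ℓ else (ℓ : ℝ)

def value (S : Finset (Fin (ℓ + k + 1))) : ℝ := min ((k : ℝ) * ℓ) (∑ i ∈ S, weight ℓ k i)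

variable {ℓ k}

lemma surplus_price_eq (T : Finset (Fin (ℓ + k + 1))) :
    surplus (value ℓ k) (price ℓ k) T =
      min ((k : ℝ) * ℓ) (#{i ∈ T | i.val ≤ ℓ} * k + #{i ∈ T | ¬i.val ≤ ℓ} * ℓ) -
        (#{i ∈ T | i.val ≤ ℓ} * ((k : ℝ) - ℓ) + #{i ∈ T | ¬i.val ≤ ℓ} * ℓ) := by
  simp only [surplus, value, weight, price, sum_ite_const_const]

lemma surplus_price_le (hk : ℓ ≤ k) (T : Finset (Fin (ℓ + k + 1))) :
    surplus (value ℓ k) (price ℓ k) T ≤ ℓ ^ 2 := by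
  rw [surplus_price_eq]
  set m := #{i ∈ T | i.val ≤ ℓ}
  set t := #{i ∈ T | ¬i.val ≤ ℓ}
  have hk : (ℓ : ℝ) ≤ k := by exact_mod_cast hk
  rcases le_total m ℓ with hm | hm
  · have hm : (m : ℝ) ≤ ℓ := by exact_mod_cast hm
    nlinarith [min_le_right ((k : ℝ) * ℓ) (m * k + t * ℓ), (ℓ.cast_nonneg : (0 : ℝ) ≤ ℓ)]
  · have hm : (ℓ : ℝ) ≤ m := by exact_mod_cast hm
    nlinarith [min_le_left ((k : ℝ) * ℓ) (m * k + t * ℓ), (t.cast_nonneg : (0 : ℝ) ≤ t)]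

lemma surplus_price_le_of_mem_light (hk : ℓ ≤ k) {T : Finset (Fin (ℓ + k + 1))}
    {i : Fin (ℓ + k + 1)} (hiT : i ∈ T) (hi : ¬(i : ℕ) ≤ ℓ) :
    surplus (value ℓ k) (price ℓ k) T ≤ ℓ ^ 2 - ℓ := by
  rw [surplus_price_eq]
  set m := #{i ∈ T | i.val ≤ ℓ}
  set t := #{i ∈ T | ¬i.val ≤ ℓ}
  have ht : (1 : ℝ) ≤ t := by
    exact_mod_cast card_pos.mpr ⟨i, mem_filter.mpr ⟨hiT, hi⟩⟩
  have hk : (ℓ : ℝ) ≤ k := by exact_mod_cast hk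
  rcases lt_or_ge m ℓ with hm | hm
  · have hm : (m : ℝ) + 1 ≤ ℓ := by exact_mod_cast hm
    nlinarith [min_le_right ((k : ℝ) * ℓ) (m * k + t * ℓ), (ℓ.cast_nonneg : (0 : ℝ) ≤ ℓ)]
  · have hm : (ℓ : ℝ) ≤ m := by exact_mod_cast hm
    nlinarith [min_le_left ((k : ℝ) * ℓ) (m * k + t * ℓ), (ℓ.cast_nonneg : (0 : ℝ) ≤ ℓ)]

lemma surplus_price_add_margin_le (hk : ℓ ≤ k) {T : Finset (Fin (ℓ + k + 1))}
    {i : Fin (ℓ + k + 1)} (hiT : i ∈ T) :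
    surplus (value ℓ k) (price ℓ k) T + (price ℓ k i - cost ℓ k i) ≤ ℓ ^ 2 := by
  by_cases hi : (i : ℕ) ≤ ℓ
  · simpa [price, cost, hi] using surplus_price_le hk T
  · simp only [price, cost, hi, if_false, sub_zero]
    linarith [surplus_price_le_of_mem_light hk hiT hi]

section HeavyBundle

variable {R : Finset (Fin (ℓ + k + 1))}

lemma value_of_forall_le (hR : ∀ j ∈ R, j.val ≤ ℓ) (hcard : #R = ℓ) :
    value ℓ k R = k * ℓ := by
  unfold value weight
  rw [sum_ite_of_true hR, sum_const, hcard, nsmul_eq_mul, mul_comm, min_self]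

lemma surplus_price_of_forall_le (hR : ∀ j ∈ R, j.val ≤ ℓ) (hcard : #R = ℓ) :
    surplus (value ℓ k) (price ℓ k) R = ℓ ^ 2 := by
  unfold surplus price
  rw [value_of_forall_le hR hcard, sum_ite_of_true hR, sum_const, hcard,
    nsmul_eq_mul]
  ring

lemma surplus_cost_of_forall_le (hR : ∀ j ∈ R, j.val ≤ ℓ) (hcard : #R = ℓ) :
    surplus (value ℓ k) (cost ℓ k) R = ℓ ^ 2 := by
  unfold surplus cost
  rw [value_of_forall_le hR hcard, sum_ite_of_true hR, sum_const, hcard,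
    nsmul_eq_mul]
  ring

end HeavyBundle

lemma exists_heavy_bundle_notMem (i : Fin (ℓ + k + 1)) :
    ∃ R : Finset (Fin (ℓ + k + 1)), (∀ j ∈ R, j.val ≤ ℓ) ∧ #R = ℓ ∧ i ∉ R := by
  set H : Finset (Fin (ℓ + k + 1)) := {j | j.val < ℓ + 1}
  have hH : #H = ℓ + 1 := by rw [Fin.card_filter_val_lt]; omega
  obtain ⟨R, hRH, hcard⟩ := exists_subset_card_eq (s := H.erase i) (n := ℓ) <| by
    have := pred_card_le_card_erase (s := H) (a := i); omega
  refine ⟨R, fun j hj => ?_, hcard, fun hi => by simpa using hRH hi⟩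
  have := (mem_filter.mp (mem_of_mem_erase (hRH hj))).2
  omega

lemma le_cost_of_mem_demand (hk : ℓ ≤ k) {i : Fin (ℓ + k + 1)} {q : ℝ}
    {T : Finset (Fin (ℓ + k + 1))}
    (hT : ∀ R, surplus (value ℓ k) (update (price ℓ k) i q) R ≤
      surplus (value ℓ k) (update (price ℓ k) i q) T) (hiT : i ∈ T) :
    q ≤ cost ℓ k i := by
  obtain ⟨R, hRheavy, hcard, hiR⟩ := exists_heavy_bundle_notMem (k := k) i
  refine le_of_mem_of_surplus_update_le hiT hiR (hT R) ?_
  rw [surplus_price_of_forall_le hRheavy hcard]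
  exact surplus_price_add_margin_le hk hiT

lemma price_nonneg (hk : ℓ ≤ k) : 0 ≤ price ℓ k := fun i => by
  have : (ℓ : ℝ) ≤ k := by exact_mod_cast hk
  unfold price; split_ifs <;> simp [this]

lemma cost_nonneg (hk : ℓ ≤ k) : 0 ≤ cost ℓ k := fun i => by
  have : (ℓ : ℝ) ≤ k := by exact_mod_cast hk
  unfold cost; split_ifs <;> simp [this]

lemma surplus_cost_le (hk : ℓ ≤ k) (S : Finset (Fin (ℓ + k + 1))) :
    surplus (value ℓ k) (cost ℓ k) S ≤ ℓ * k := by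
  have := sum_nonneg fun i (_ : i ∈ S) => cost_nonneg hk i
  have := min_le_left ((k : ℝ) * ℓ) (∑ i ∈ S, weight ℓ k i)
  rw [surplus, value]
  linarith [mul_comm (k : ℝ) ℓ]

lemma surplus_cost_light_bundle :
    surplus (value ℓ k) (cost ℓ k) {i | ¬i.val ≤ ℓ} = ℓ * k := by
  have hcard : #{i : Fin (ℓ + k + 1) | ¬i.val ≤ ℓ} = k := by
    have := card_filter_add_card_filter_not (s := univ) (fun i : Fin (ℓ + k + 1) => i.val < ℓ + 1)
    rw [Fin.card_filter_val_lt, card_univ, Fintype.card_fin] at this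
    simp only [Nat.lt_add_one_iff] at this
    omega
  have hlight : ∀ i ∈ ({i | ¬i.val ≤ ℓ} : Finset (Fin (ℓ + k + 1))), ¬i.val ≤ ℓ := by simp
  unfold surplus value weight cost
  rw [sum_ite_of_false hlight, sum_ite_of_false hlight, sum_const,
    hcard, nsmul_eq_mul, sum_const_zero, min_self, sub_zero, mul_comm]

end UnboundedPoA

open UnboundedPoA in
theorem stmt15_general (ℓ k : ℕ) (hk : ℓ < k)
    (w c p : Fin (ℓ + k + 1) → ℝ)
    (hw : ∀ i, w i = if (i : ℕ) ≤ ℓ then (k : ℝ) else (ℓ : ℝ))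
    (hcost : ∀ i, c i = if (i : ℕ) ≤ ℓ then (k : ℝ) - ℓ else 0)
    (hprice : ∀ i, p i = if (i : ℕ) ≤ ℓ then (k : ℝ) - ℓ else (ℓ : ℝ))
    (v : Finset (Fin (ℓ + k + 1)) → ℝ)
    (hv : ∀ S, v S = min ((k : ℝ) * ℓ) (∑ i ∈ S, w i))
    (X : (Fin (ℓ + k + 1) → ℝ) → Finset (Fin (ℓ + k + 1)))
    (hXd : ∀ q : Fin (ℓ + k + 1) → ℝ, (∀ i, 0 ≤ q i) → ∀ T,
      v T - ∑ i ∈ T, q i ≤ v (X q) - ∑ i ∈ X q, q i)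
    -- lexicographic tie-breaking selects the first `ℓ` (heavy) sellers:
    (hXp : X p = Finset.univ.filter (fun i : Fin (ℓ + k + 1) => (i : ℕ) < ℓ)) :
    (∀ i : Fin (ℓ + k + 1), ∀ q : ℝ, 0 ≤ q →
      (if i ∈ X (Function.update p i q) then q - c i else 0) ≤
      (if i ∈ X p then p i - c i else 0)) ∧
    v (X p) - ∑ i ∈ X p, c i = (ℓ : ℝ) ^ 2 ∧
    (∀ S : Finset (Fin (ℓ + k + 1)), v S - ∑ i ∈ S, c i ≤ (ℓ : ℝ) * k) ∧
    (∃ S : Finset (Fin (ℓ + k + 1)), v S - ∑ i ∈ S, c i = (ℓ : ℝ) * k) := by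
  obtain rfl : w = weight ℓ k := funext hw
  obtain rfl : c = cost ℓ k := funext hcost
  obtain rfl : p = price ℓ k := funext hprice
  obtain rfl : v = value ℓ k := funext hv
  have hXp_heavy : ∀ j ∈ X (price ℓ k), j.val ≤ ℓ := by
    simp only [hXp, mem_filter, mem_univ, true_and]
    exact fun j hj => hj.le
  have hXp_card : #(X (price ℓ k)) = ℓ := by
    rw [hXp, Fin.card_filter_val_lt]
    omega
  refine ⟨fun i q hq => ?_, surplus_cost_of_forall_le hXp_heavy hXp_card,
    surplus_cost_le hk.le, ⟨_, surplus_cost_light_bundle⟩⟩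
  have hdemand := hXd (update (price ℓ k) i q) (le_update_iff.mpr ⟨hq, fun j _ => price_nonneg hk.le j⟩)
  have hmargin : (if i ∈ X (price ℓ k) then price ℓ k i - cost ℓ k i else 0) = 0 := by
    split_ifs with hi
    · simp [price, cost, hXp_heavy i hi]
    · rfl
  rw [hmargin]
  split_ifs with hi
  · exact sub_nonpos.mpr (le_cost_of_mem_demand hk.le hdemand hi)
  · rfl

/-- Unbounded Price of Anarchy with costs and a submodular
valuation: sellers `0,…,ℓ` have cost `k-ℓ` and weight `k`, sellers
`ℓ+1,…,ℓ+k` have cost `0` and weight `ℓ`, and `v S = min (kℓ) (∑_{i∈S} w i)`.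
The price vector `p` with `p_i = k-ℓ` for heavy sellers and `p_i = ℓ` for light
sellers, together with lexicographic tie-breaking (which selects
`{0,…,ℓ-1}`), is a pure Nash equilibrium of welfare `ℓ²`, while the optimal
welfare is `ℓ·k`. -/
theorem stmt15 (ℓ k : ℕ) (hℓ : 1 ≤ ℓ) (hk : ℓ < k) (hodd : Odd k)
    (w c p : Fin (ℓ + k + 1) → ℝ)
    (hw : ∀ i, w i = if (i : ℕ) ≤ ℓ then (k : ℝ) else (ℓ : ℝ))
    (hcost : ∀ i, c i = if (i : ℕ) ≤ ℓ then (k : ℝ) - ℓ else 0)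
    (hprice : ∀ i, p i = if (i : ℕ) ≤ ℓ then (k : ℝ) - ℓ else (ℓ : ℝ))
    (v : Finset (Fin (ℓ + k + 1)) → ℝ)
    (hv : ∀ S, v S = min ((k : ℝ) * ℓ) (∑ i ∈ S, w i))
    (X : (Fin (ℓ + k + 1) → ℝ) → Finset (Fin (ℓ + k + 1)))
    (hXd : ∀ q : Fin (ℓ + k + 1) → ℝ, (∀ i, 0 ≤ q i) → ∀ T,
      v T - ∑ i ∈ T, q i ≤ v (X q) - ∑ i ∈ X q, q i)
    -- lexicographic tie-breaking selects the first `ℓ` (heavy) sellers: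
    (hXp : X p = Finset.univ.filter (fun i : Fin (ℓ + k + 1) => (i : ℕ) < ℓ)) :
    (∀ i : Fin (ℓ + k + 1), ∀ q : ℝ, 0 ≤ q →
      (if i ∈ X (Function.update p i q) then q - c i else 0) ≤
      (if i ∈ X p then p i - c i else 0)) ∧
    v (X p) - ∑ i ∈ X p, c i = (ℓ : ℝ) ^ 2 ∧
    (∀ S : Finset (Fin (ℓ + k + 1)), v S - ∑ i ∈ S, c i ≤ (ℓ : ℝ) * k) ∧
    (∃ S : Finset (Fin (ℓ + k + 1)), v S - ∑ i ∈ S, c i = (ℓ : ℝ) * k) :=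
  stmt15_general ℓ k hk w c p hw hcost hprice v hv X hXd hXp
end
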